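/- arXiv:2408.11653 — 2 statements merged into one kernel-verified Lean document; each statement's English description precedes it below -/
import Mathlib

section
/- Let Λ ⊆ ℝⁿ be a full-rank lattice (a discrete additive subgroup spanning ℝⁿ) such that Λ is generated as a group by vectors of Euclidean length at most r. Then for every w ∈ ℝⁿ there exists λ ∈ Λ with |λ - w| ≤ (√n / 2)·r. -/
/-!
Pick a basis `v₁, …, vₙ` of `ℝⁿ` among the short generators and approximate `w` by Babai's
nearest-plane procedure: writing `w = a • vₖ + y` with `y` in the span of `v₁, …, vₖ₋₁`, round
`a` to the nearest integer `m` and recurse on the part of `(a - m) • vₖ + y` lying in that span.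
The error left behind is `(a - m)` times the component of `vₖ` orthogonal to the span, of length
at most `‖vₖ‖ / 2 ≤ r / 2`, and by Pythagoras these orthogonal errors add up in square to at most
`n r² / 4`.
-/

open Submodule RealInnerProductSpace Finset

theorem Submodule.span_addSubgroupClosure {R M : Type*} [Ring R] [AddCommGroup M] [Module R M]
    (s : Set M) : span R (AddSubgroup.closure s : Set M) = span R s := by
  rw [← span_int_eq_addSubgroupClosure, coe_toAddSubgroup, span_span_of_tower]

variable {E : Type*} [NormedAddCommGroup E] [InnerProductSpace ℝ E]

theorem exists_mem_zmultiples_sup_norm_sub_sq_le {K : Submodule ℝ E} [K.HasOrthogonalProjection]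
    {G : AddSubgroup E} (hGK : G ≤ K.toAddSubgroup) {c : ℝ}
    (hG : ∀ z ∈ K, ∃ l ∈ G, ‖l - z‖ ^ 2 ≤ c) (v : E) {w : E} (hw : w ∈ (ℝ ∙ v) ⊔ K) :
    ∃ l ∈ AddSubgroup.zmultiples v ⊔ G, ‖l - w‖ ^ 2 ≤ c + ‖v‖ ^ 2 / 4 := by
  obtain ⟨_, hav, y, hy, rfl⟩ := mem_sup.mp hw
  obtain ⟨a, rfl⟩ := mem_span_singleton.mp hav
  set p := K.starProjection v
  set u := Kᗮ.starProjection v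
  have hpu : p + u = v := K.starProjection_add_starProjection_orthogonal v
  set m := round a
  have hz : y + (a - m) • p ∈ K := K.add_mem hy (K.smul_mem _ (K.starProjection_apply_mem v))
  obtain ⟨l, hlG, hl⟩ := hG _ hz
  refine ⟨m • v + l, AddSubgroup.add_mem_sup (AddSubgroup.zsmul_mem_zmultiples v m) hlG, ?_⟩
  have hsplit : m • v + l - (a • v + y) = (l - (y + (a - m) • p)) - (a - m) • u := by
    rw [← hpu]; module
  have horth : ⟪l - (y + (a - m) • p), (a - m) • u⟫ = 0 :=
    inner_right_of_mem_orthogonal (K.sub_mem (hGK hlG) hz)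
      (Kᗮ.smul_mem _ (Kᗮ.starProjection_apply_mem v))
  have hsmall : |a - m| * ‖u‖ ≤ ‖v‖ / 2 := by
    have := mul_le_mul (abs_sub_round a) (Kᗮ.norm_starProjection_apply_le v) (norm_nonneg _)
      (by norm_num)
    linarith
  rw [hsplit, norm_sub_sq_real, horth, norm_smul, Real.norm_eq_abs]
  nlinarith [pow_le_pow_left₀ (by positivity) hsmall 2]

theorem exists_mem_closure_norm_sub_sq_le (s : Finset E) {w : E} (hw : w ∈ span ℝ (s : Set E)) :
    ∃ l ∈ AddSubgroup.closure (s : Set E), ‖l - w‖ ^ 2 ≤ (∑ v ∈ s, ‖v‖ ^ 2) / 4 := by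
  classical
  induction s using Finset.induction_on generalizing w with
  | empty =>
    rw [Finset.coe_empty, span_empty, mem_bot] at hw
    exact ⟨0, zero_mem _, by simp [hw]⟩
  | insert v s hvs ih =>
    have hclosure : AddSubgroup.closure (s : Set E) ≤ (span ℝ (s : Set E)).toAddSubgroup := by
      rw [AddSubgroup.closure_le]; exact subset_span
    rw [Finset.coe_insert, span_insert] at hw
    obtain ⟨l, hl, hlw⟩ :=
      exists_mem_zmultiples_sup_norm_sub_sq_le hclosure (fun _ hz => ih hz) v hw
    refine ⟨l, ?_, by rw [Finset.sum_insert hvs]; linarith⟩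
    rwa [Finset.coe_insert, Set.insert_eq, AddSubgroup.closure_union,
      ← AddSubgroup.zmultiples_eq_closure]

theorem exists_mem_closure_norm_sub_le {s : Finset E} {r : ℝ} (hr : ∀ v ∈ s, ‖v‖ ≤ r) {w : E}
    (hw : w ∈ span ℝ (s : Set E)) :
    ∃ l ∈ AddSubgroup.closure (s : Set E), ‖l - w‖ ≤ √(#s : ℝ) / 2 * r := by
  obtain ⟨l, hl, hlw⟩ := exists_mem_closure_norm_sub_sq_le s hw
  refine ⟨l, hl, ?_⟩
  obtain rfl | ⟨v, hv⟩ := s.eq_empty_or_nonempty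
  · simpa using hlw
  have hr0 : 0 ≤ r := (norm_nonneg v).trans (hr v hv)
  have hsum : ∑ v ∈ s, ‖v‖ ^ 2 ≤ #s * r ^ 2 := by
    simpa using Finset.sum_le_sum fun v hv => pow_le_pow_left₀ (norm_nonneg v) (hr v hv) 2
  refine le_of_sq_le_sq ?_ (by positivity)
  rw [mul_pow, div_pow, Real.sq_sqrt (Nat.cast_nonneg _)]
  linarith

theorem stmt2_general {n : ℕ} (r : ℝ)
    (Λ : AddSubgroup (EuclideanSpace ℝ (Fin n)))
    (hspan : Submodule.span ℝ (Λ : Set (EuclideanSpace ℝ (Fin n))) = ⊤)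
    (hgen : AddSubgroup.closure {v : EuclideanSpace ℝ (Fin n) | v ∈ Λ ∧ ‖v‖ ≤ r} = Λ)
    (w : EuclideanSpace ℝ (Fin n)) :
    ∃ l ∈ Λ, ‖l - w‖ ≤ (Real.sqrt n / 2) * r := by
  set S := {v : EuclideanSpace ℝ (Fin n) | v ∈ Λ ∧ ‖v‖ ≤ r}
  have hS : span ℝ S = ⊤ := by rw [← span_addSubgroupClosure, hgen, hspan]
  obtain ⟨t, htS, htcard, htspan, -⟩ := exists_finset_span_eq_linearIndepOn ℝ S
  obtain ⟨l, hl, hlw⟩ :=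
    exists_mem_closure_norm_sub_le (fun v hv => (htS hv).2) (htspan ▸ hS ▸ mem_top : w ∈ _)
  refine ⟨l, hgen ▸ AddSubgroup.closure_mono htS hl, ?_⟩
  rwa [htcard, hS, finrank_top, finrank_euclideanSpace_fin] at hlw

/-- If a full-rank lattice `Λ ⊆ ℝⁿ` is generated as a group by vectors of Euclidean length
at most `r`, then every `w ∈ ℝⁿ` is within distance `(√n / 2)·r` of a lattice point. -/
theorem stmt2 {n : ℕ} (r : ℝ)
    (Λ : AddSubgroup (EuclideanSpace ℝ (Fin n)))
    (hdisc : DiscreteTopology Λ)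
    (hspan : Submodule.span ℝ (Λ : Set (EuclideanSpace ℝ (Fin n))) = ⊤)
    (hgen : AddSubgroup.closure {v : EuclideanSpace ℝ (Fin n) | v ∈ Λ ∧ ‖v‖ ≤ r} = Λ)
    (w : EuclideanSpace ℝ (Fin n)) :
    ∃ l ∈ Λ, ‖l - w‖ ≤ (Real.sqrt n / 2) * r :=
  stmt2_general r Λ hspan hgen w
end

section
/- Let Λ ⊆ ℝⁿ be a full-rank lattice, and suppose the closed ball B_r(0) contains n linearly independent vectors of Λ. Then Λ is generated as a group by its elements of length at most bₙ·r, where bₙ = max(1, √n/2). -/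
/-!
Babai's nearest-plane argument: if `v₁, …, vₖ` have length at most `r`, every point of their
real span lies within `√k · r / 2` of the group they generate. Adding one vector `u` to a
subspace `V` costs at most `‖u⊥‖² / 4` in squared distance, where `u⊥` is the component of `u`
orthogonal to `V`: round the `u`-coordinate to the nearest integer and approximate the rest
inside `V`; the two errors are orthogonal. Hence every lattice point `x` lies within `√n · r / 2`
of some `y` in the subgroup generated by the `vᵢ`, and `x = (x - y) + y` is a sum of short lattice
vectors.
-/

open Submodule

variable {E : Type*} [NormedAddCommGroup E] [InnerProductSpace ℝ E]

lemma norm_sub_starProjection_le (V : Submodule ℝ E) [V.HasOrthogonalProjection] (u : E) :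
    ‖u - V.starProjection u‖ ≤ ‖u‖ := by
  simpa [starProjection_orthogonal] using Vᗮ.norm_starProjection_apply_le u

lemma exists_mem_sup_zmultiples_norm_sub_sq_le (V : Submodule ℝ E) [V.HasOrthogonalProjection]
    (H : AddSubgroup E) (hHV : (H : Set E) ⊆ V) {d : ℝ}
    (hV : ∀ x ∈ V, ∃ y ∈ H, ‖x - y‖ ^ 2 ≤ d) (u : E) {x : E} (hx : x ∈ V ⊔ ℝ ∙ u) :
    ∃ y ∈ H ⊔ AddSubgroup.zmultiples u,
      ‖x - y‖ ^ 2 ≤ d + ‖u - V.starProjection u‖ ^ 2 / 4 := by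
  obtain ⟨w, hw, cu, hcu, rfl⟩ := mem_sup.1 hx
  obtain ⟨c, rfl⟩ := mem_span_singleton.1 hcu
  set p := V.starProjection u
  set g := u - p
  set m := round c
  have hp : p ∈ V := V.starProjection_apply_mem u
  have hg : g ∈ Vᗮ := V.sub_starProjection_mem_orthogonal u
  obtain ⟨y, hyH, hy⟩ := hV (w + (c - m) • p) (V.add_mem hw (V.smul_mem _ hp))
  refine ⟨y + m • u, add_mem (AddSubgroup.mem_sup_left hyH)
    (AddSubgroup.mem_sup_right (AddSubgroup.zsmul_mem_zmultiples u m)), ?_⟩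
  have hsplit : w + c • u - (y + m • u) = (w + (c - m) • p - y) + (c - m) • g := by
    simp only [g, ← Int.cast_smul_eq_zsmul ℝ, smul_sub, sub_smul]
    abel
  have horth : inner ℝ (w + (c - m) • p - y) ((c - m) • g) = 0 :=
    inner_right_of_mem_orthogonal (V.sub_mem (V.add_mem hw (V.smul_mem _ hp)) (hHV hyH))
      (Vᗮ.smul_mem _ hg)
  have hround : ‖(c - m) • g‖ ^ 2 ≤ ‖g‖ ^ 2 / 4 := by
    rw [norm_smul, mul_pow, Real.norm_eq_abs, sq_abs]
    have hc : (c - m) ^ 2 ≤ 1 / 4 := by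
      rw [← sq_abs]
      nlinarith [abs_sub_round c, abs_nonneg (c - m)]
    nlinarith [sq_nonneg ‖g‖]
  rw [hsplit, sq, norm_add_sq_eq_norm_sq_add_norm_sq_real horth, ← sq, ← sq]
  linarith

theorem exists_mem_closure_norm_sub_sq_le_s3 {r : ℝ} :
    ∀ {k : ℕ} (v : Fin k → E), (∀ i, ‖v i‖ ≤ r) → ∀ x ∈ span ℝ (Set.range v),
      ∃ y ∈ AddSubgroup.closure (Set.range v), ‖x - y‖ ^ 2 ≤ k * r ^ 2 / 4
  | 0, v, _, x, hx => by simp_all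
  | k + 1, v, hv, x, hx => by
    have := FiniteDimensional.span_of_finite ℝ (Set.finite_range (Fin.tail v))
    set V := span ℝ (Set.range (Fin.tail v))
    have hg : ‖v 0 - V.starProjection (v 0)‖ ^ 2 ≤ r ^ 2 :=
      pow_le_pow_left₀ (norm_nonneg _) ((norm_sub_starProjection_le V _).trans (hv 0)) 2
    rw [Fin.range_fin_succ, span_insert, sup_comm] at hx
    obtain ⟨y, hy, hxy⟩ := exists_mem_sup_zmultiples_norm_sub_sq_le V _
      ((AddSubgroup.closure_le V.toAddSubgroup).2 subset_span)
      (exists_mem_closure_norm_sub_sq_le_s3 (Fin.tail v) (fun i => hv _)) (v 0) hx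
    refine ⟨y, ?_, by push_cast; linarith⟩
    rwa [Fin.range_fin_succ, Set.insert_eq, AddSubgroup.closure_union,
      ← AddSubgroup.zmultiples_eq_closure, sup_comm]

theorem stmt3_general {n : ℕ} (r : ℝ)
    (Λ : AddSubgroup (EuclideanSpace ℝ (Fin n)))
    (v : Fin n → EuclideanSpace ℝ (Fin n))
    (hvΛ : ∀ i, v i ∈ Λ) (hvr : ∀ i, ‖v i‖ ≤ r)
    (hli : LinearIndependent ℝ v) :
    AddSubgroup.closure
      {x : EuclideanSpace ℝ (Fin n) | x ∈ Λ ∧ ‖x‖ ≤ max 1 (Real.sqrt n / 2) * r} = Λ := by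
  obtain rfl | hn := n.eq_zero_or_pos
  · have : Subsingleton (AddSubgroup (EuclideanSpace ℝ (Fin 0))) :=
      AddSubgroup.subsingleton_iff.2 inferInstance
    exact Subsingleton.elim _ _
  have hr : 0 ≤ r := (norm_nonneg _).trans (hvr ⟨0, hn⟩)
  refine le_antisymm ((AddSubgroup.closure_le _).2 fun x hx => hx.1) fun x hx => ?_
  have hspan : span ℝ (Set.range v) = ⊤ := hli.span_eq_top_of_card_eq_finrank' (by simp)
  obtain ⟨y, hy, hxy⟩ := exists_mem_closure_norm_sub_sq_le_s3 v hvr x (hspan ▸ mem_top)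
  have hxy' : ‖x - y‖ ≤ Real.sqrt n / 2 * r := by
    refine le_of_pow_le_pow_left₀ two_ne_zero (by positivity) ?_
    rw [mul_pow, div_pow, Real.sq_sqrt n.cast_nonneg]
    linarith
  have hvshort : Set.range v ⊆ {x | x ∈ Λ ∧ ‖x‖ ≤ max 1 (Real.sqrt n / 2) * r} :=
    Set.range_subset_iff.2 fun i =>
      ⟨hvΛ i, (hvr i).trans (le_mul_of_one_le_left hr (le_max_left _ _))⟩
  have hyΛ : y ∈ Λ := (AddSubgroup.closure_le Λ).2 (Set.range_subset_iff.2 hvΛ) hy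
  rw [← sub_add_cancel x y]
  exact add_mem (AddSubgroup.subset_closure ⟨sub_mem hx hyΛ,
    hxy'.trans (mul_le_mul_of_nonneg_right (le_max_right _ _) hr)⟩)
    (AddSubgroup.closure_mono hvshort hy)

/-- If the closed ball of radius `r` contains `n` linearly independent vectors of a full-rank
lattice `Λ ⊆ ℝⁿ`, then `Λ` is generated as a group by its elements of length at most
`bₙ·r`, where `bₙ = max 1 (√n / 2)`. -/
theorem stmt3 {n : ℕ} (r : ℝ)
    (Λ : AddSubgroup (EuclideanSpace ℝ (Fin n)))
    (hdisc : DiscreteTopology Λ)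
    (hspan : Submodule.span ℝ (Λ : Set (EuclideanSpace ℝ (Fin n))) = ⊤)
    (v : Fin n → EuclideanSpace ℝ (Fin n))
    (hvΛ : ∀ i, v i ∈ Λ) (hvr : ∀ i, ‖v i‖ ≤ r)
    (hli : LinearIndependent ℝ v) :
    AddSubgroup.closure
      {x : EuclideanSpace ℝ (Fin n) | x ∈ Λ ∧ ‖x‖ ≤ max 1 (Real.sqrt n / 2) * r} = Λ :=
  stmt3_general r Λ v hvΛ hvr hli
end
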